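/- Let Z be a block matrix over a field of the form Z = [[I_r, 0, 0, 0, 0], [U_1, W_11, W_12, W_13, 0], [0, U_2, W_21, W_22, 0], [0, 0, U_3, W_31, I_r], [0, 0, 0, U_4, 0]] with U_1, U_2, U_3, U_4 upper triangular with unit diagonal as above, and let C = [[W_11, W_12],[U_2, W_21]]. Then Z is invertible if and only if C is invertible. -/
import Mathlib


open Matrix

section Aux

/-- Row reindexing for the Edmonds matrix: rows in order (1, 4, 5, 2, 3). -/
def edmondsRowEquiv (r k m : ℕ) :
    (Fin r ⊕ Fin r ⊕ Fin m ⊕ Fin r ⊕ Fin k) ≃ (Fin r ⊕ Fin r ⊕ Fin k ⊕ Fin r ⊕ Fin m) where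
  toFun x := match x with
    | Sum.inl a => Sum.inl a
    | Sum.inr (Sum.inl a) => Sum.inr (Sum.inr (Sum.inr (Sum.inl a)))
    | Sum.inr (Sum.inr (Sum.inl a)) => Sum.inr (Sum.inr (Sum.inr (Sum.inr a)))
    | Sum.inr (Sum.inr (Sum.inr (Sum.inl a))) => Sum.inr (Sum.inl a)
    | Sum.inr (Sum.inr (Sum.inr (Sum.inr a))) => Sum.inr (Sum.inr (Sum.inl a))
  invFun y := match y with
    | Sum.inl a => Sum.inl a
    | Sum.inr (Sum.inl a) => Sum.inr (Sum.inr (Sum.inr (Sum.inl a)))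
    | Sum.inr (Sum.inr (Sum.inl a)) => Sum.inr (Sum.inr (Sum.inr (Sum.inr a)))
    | Sum.inr (Sum.inr (Sum.inr (Sum.inl a))) => Sum.inr (Sum.inl a)
    | Sum.inr (Sum.inr (Sum.inr (Sum.inr a))) => Sum.inr (Sum.inr (Sum.inl a))
  left_inv := by rintro (a|a|a|a|a) <;> rfl
  right_inv := by rintro (a|a|a|a|a) <;> rfl

/-- Column reindexing for the Edmonds matrix: columns in order (c1, c5, c4, c3, c2). -/
def edmondsColEquiv (r k m : ℕ) :
    (Fin r ⊕ Fin r ⊕ Fin m ⊕ Fin r ⊕ Fin k) ≃ (Fin r ⊕ Fin k ⊕ Fin r ⊕ Fin m ⊕ Fin r) where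
  toFun x := match x with
    | Sum.inl a => Sum.inl a
    | Sum.inr (Sum.inl a) => Sum.inr (Sum.inr (Sum.inr (Sum.inr a)))
    | Sum.inr (Sum.inr (Sum.inl a)) => Sum.inr (Sum.inr (Sum.inr (Sum.inl a)))
    | Sum.inr (Sum.inr (Sum.inr (Sum.inl a))) => Sum.inr (Sum.inr (Sum.inl a))
    | Sum.inr (Sum.inr (Sum.inr (Sum.inr a))) => Sum.inr (Sum.inl a)
  invFun y := match y with
    | Sum.inl a => Sum.inl a
    | Sum.inr (Sum.inl a) => Sum.inr (Sum.inr (Sum.inr (Sum.inr a)))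
    | Sum.inr (Sum.inr (Sum.inl a)) => Sum.inr (Sum.inr (Sum.inr (Sum.inl a)))
    | Sum.inr (Sum.inr (Sum.inr (Sum.inl a))) => Sum.inr (Sum.inr (Sum.inl a))
    | Sum.inr (Sum.inr (Sum.inr (Sum.inr a))) => Sum.inr (Sum.inl a)
  left_inv := by rintro (a|a|a|a|a) <;> rfl
  right_inv := by rintro (a|a|a|a|a) <;> rfl

end Aux

/-- The Edmonds matrix `Z` with block structure
`[[I, 0, 0, 0, 0], [U₁, W₁₁, W₁₂, W₁₃, 0], [0, U₂, W₂₁, W₂₂, 0],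
[0, 0, U₃, W₃₁, I], [0, 0, 0, U₄, 0]]`.
Row blocks have sizes `r, r, k, r, m`; column blocks have sizes `r, k, r, m, r`. -/
def edmondsMat {K : Type*} [Field K] {r k m : ℕ}
    (U1 U3 W12 : Matrix (Fin r) (Fin r) K)
    (U2 : Matrix (Fin k) (Fin k) K) (U4 : Matrix (Fin m) (Fin m) K)
    (W11 : Matrix (Fin r) (Fin k) K)
    (W13 W31 : Matrix (Fin r) (Fin m) K)
    (W21 : Matrix (Fin k) (Fin r) K) (W22 : Matrix (Fin k) (Fin m) K) :
    Matrix (Fin r ⊕ Fin r ⊕ Fin k ⊕ Fin r ⊕ Fin m)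
      (Fin r ⊕ Fin k ⊕ Fin r ⊕ Fin m ⊕ Fin r) K :=
  Matrix.of fun i j =>
    match i, j with
    | Sum.inl i1, Sum.inl j1 => if i1 = j1 then (1 : K) else 0
    | Sum.inl _, _ => 0
    | Sum.inr (Sum.inl i2), Sum.inl j1 => U1 i2 j1
    | Sum.inr (Sum.inl i2), Sum.inr (Sum.inl j2) => W11 i2 j2
    | Sum.inr (Sum.inl i2), Sum.inr (Sum.inr (Sum.inl j3)) => W12 i2 j3
    | Sum.inr (Sum.inl i2), Sum.inr (Sum.inr (Sum.inr (Sum.inl j4))) => W13 i2 j4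
    | Sum.inr (Sum.inl _), Sum.inr (Sum.inr (Sum.inr (Sum.inr _))) => 0
    | Sum.inr (Sum.inr (Sum.inl i3)), Sum.inr (Sum.inl j2) => U2 i3 j2
    | Sum.inr (Sum.inr (Sum.inl i3)), Sum.inr (Sum.inr (Sum.inl j3)) => W21 i3 j3
    | Sum.inr (Sum.inr (Sum.inl i3)), Sum.inr (Sum.inr (Sum.inr (Sum.inl j4))) => W22 i3 j4
    | Sum.inr (Sum.inr (Sum.inl _)), _ => 0
    | Sum.inr (Sum.inr (Sum.inr (Sum.inl i4))), Sum.inr (Sum.inr (Sum.inl j3)) => U3 i4 j3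
    | Sum.inr (Sum.inr (Sum.inr (Sum.inl i4))), Sum.inr (Sum.inr (Sum.inr (Sum.inl j4))) => W31 i4 j4
    | Sum.inr (Sum.inr (Sum.inr (Sum.inl i4))), Sum.inr (Sum.inr (Sum.inr (Sum.inr j5))) =>
        if i4 = j5 then (1 : K) else 0
    | Sum.inr (Sum.inr (Sum.inr (Sum.inl _))), _ => 0
    | Sum.inr (Sum.inr (Sum.inr (Sum.inr i5))), Sum.inr (Sum.inr (Sum.inr (Sum.inl j4))) => U4 i5 j4
    | Sum.inr (Sum.inr (Sum.inr (Sum.inr _))), _ => 0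

/-- The critical matrix `C = [[W₁₁, W₁₂], [U₂, W₂₁]]`, made square by
reindexing the rows along `Fin k ⊕ Fin r ≃ Fin r ⊕ Fin k`. -/
def criticalMat {K : Type*} [Field K] {r k : ℕ}
    (W12 : Matrix (Fin r) (Fin r) K) (U2 : Matrix (Fin k) (Fin k) K)
    (W11 : Matrix (Fin r) (Fin k) K) (W21 : Matrix (Fin k) (Fin r) K) :
    Matrix (Fin k ⊕ Fin r) (Fin k ⊕ Fin r) K :=
  (Matrix.fromBlocks W11 W12 U2 W21).submatrix (Equiv.sumComm (Fin k) (Fin r)) id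

/-- The Edmonds matrix `Z` is invertible if and only if its critical matrix
`C` is invertible. -/
theorem stmt3 {K : Type*} [Field K] (r k m : ℕ)
    (U1 U3 W12 : Matrix (Fin r) (Fin r) K)
    (U2 : Matrix (Fin k) (Fin k) K) (U4 : Matrix (Fin m) (Fin m) K)
    (W11 : Matrix (Fin r) (Fin k) K)
    (W13 W31 : Matrix (Fin r) (Fin m) K)
    (W21 : Matrix (Fin k) (Fin r) K) (W22 : Matrix (Fin k) (Fin m) K)
    (hU1 : ∀ i j : Fin r, j < i → U1 i j = 0) (hU1d : ∀ i, U1 i i = 1)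
    (hU2 : ∀ i j : Fin k, j < i → U2 i j = 0) (hU2d : ∀ i, U2 i i = 1)
    (hU3 : ∀ i j : Fin r, j < i → U3 i j = 0) (hU3d : ∀ i, U3 i i = 1)
    (hU4 : ∀ i j : Fin m, j < i → U4 i j = 0) (hU4d : ∀ i, U4 i i = 1)
    (e : (Fin r ⊕ Fin k ⊕ Fin r ⊕ Fin m ⊕ Fin r) ≃
      (Fin r ⊕ Fin r ⊕ Fin k ⊕ Fin r ⊕ Fin m)) :
    IsUnit ((edmondsMat U1 U3 W12 U2 U4 W11 W13 W31 W21 W22).submatrix e id) ↔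
      IsUnit (criticalMat W12 U2 W11 W21) := by
  classical
  set Z := edmondsMat U1 U3 W12 U2 U4 W11 W13 W31 W21 W22 with hZ
  set ρ := edmondsRowEquiv r k m
  set γ := edmondsColEquiv r k m
  set M := Z.submatrix ρ γ with hM
  -- determinant of M equals determinant of criticalMat
  have hdetM : M.det = (criticalMat W12 U2 W11 W21).det := by
    have h11 : M.toBlocks₁₁ = 1 := by
      ext i j
      simp [hM, Matrix.toBlocks₁₁, hZ, edmondsMat, ρ, γ, edmondsRowEquiv, edmondsColEquiv,
        Matrix.one_apply]
    have h12 : M.toBlocks₁₂ = 0 := by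
      ext i j
      rcases j with j | j | j | j <;>
        simp [hM, Matrix.toBlocks₁₂, hZ, edmondsMat, ρ, γ, edmondsRowEquiv, edmondsColEquiv]
    set D1 := M.toBlocks₂₂ with hD1
    have step1 : M.det = D1.det := by
      calc M.det = (Matrix.fromBlocks M.toBlocks₁₁ M.toBlocks₁₂ M.toBlocks₂₁ M.toBlocks₂₂).det := by
            rw [Matrix.fromBlocks_toBlocks]
        _ = (Matrix.fromBlocks 1 0 M.toBlocks₂₁ D1).det := by rw [h11, h12]
        _ = D1.det := by rw [Matrix.det_fromBlocks_zero₁₂, Matrix.det_one, one_mul]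
    have h11' : D1.toBlocks₁₁ = 1 := by
      ext i j
      simp [hD1, hM, Matrix.toBlocks₂₂, Matrix.toBlocks₁₁, hZ, edmondsMat, ρ, γ,
        edmondsRowEquiv, edmondsColEquiv, Matrix.one_apply]
    have h21' : D1.toBlocks₂₁ = 0 := by
      ext i j
      rcases i with i | i | i <;>
        simp [hD1, hM, Matrix.toBlocks₂₂, Matrix.toBlocks₂₁, hZ, edmondsMat, ρ, γ,
          edmondsRowEquiv, edmondsColEquiv]
    set D2 := D1.toBlocks₂₂ with hD2
    have step2 : D1.det = D2.det := by
      calc D1.det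
          = (Matrix.fromBlocks D1.toBlocks₁₁ D1.toBlocks₁₂ D1.toBlocks₂₁ D1.toBlocks₂₂).det := by
            rw [Matrix.fromBlocks_toBlocks]
        _ = (Matrix.fromBlocks 1 D1.toBlocks₁₂ 0 D2).det := by rw [h11', h21']
        _ = D2.det := by rw [Matrix.det_fromBlocks_zero₂₁, Matrix.det_one, one_mul]
    have h11'' : D2.toBlocks₁₁ = U4 := by
      ext i j
      simp [hD2, hD1, hM, Matrix.toBlocks₂₂, Matrix.toBlocks₁₁, hZ, edmondsMat, ρ, γ,
        edmondsRowEquiv, edmondsColEquiv]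
    have h12'' : D2.toBlocks₁₂ = 0 := by
      ext i j
      rcases j with j | j <;>
        simp [hD2, hD1, hM, Matrix.toBlocks₂₂, Matrix.toBlocks₁₂, hZ, edmondsMat, ρ, γ,
          edmondsRowEquiv, edmondsColEquiv]
    set D3 := D2.toBlocks₂₂ with hD3
    have hU4det : U4.det = 1 := by
      rw [Matrix.det_of_upperTriangular (show U4.BlockTriangular id from fun i j h => hU4 i j h)]
      simp [hU4d]
    have step3 : D2.det = D3.det := by
      calc D2.det
          = (Matrix.fromBlocks D2.toBlocks₁₁ D2.toBlocks₁₂ D2.toBlocks₂₁ D2.toBlocks₂₂).det := by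
            rw [Matrix.fromBlocks_toBlocks]
        _ = (Matrix.fromBlocks U4 0 D2.toBlocks₂₁ D3).det := by rw [h11'', h12'']
        _ = D3.det := by rw [Matrix.det_fromBlocks_zero₁₂, hU4det, one_mul]
    have hD3eq : D3 = (criticalMat W12 U2 W11 W21).submatrix
        (Equiv.sumComm (Fin r) (Fin k)) (Equiv.sumComm (Fin r) (Fin k)) := by
      ext i j
      rcases i with i | i <;> rcases j with j | j <;>
        simp [hD3, hD2, hD1, hM, Matrix.toBlocks₂₂, hZ, edmondsMat, ρ, γ,
          edmondsRowEquiv, edmondsColEquiv, criticalMat, Matrix.fromBlocks]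
    rw [step1, step2, step3, hD3eq, Matrix.det_submatrix_equiv_self]
  -- relate Z.submatrix e id to M up to a permutation of rows/columns
  have hrel : Z.submatrix e id = (M.submatrix γ.symm γ.symm).submatrix
      ((e.trans ρ.symm).trans γ) id := by
    ext i j
    simp [hM, Matrix.submatrix_apply]
  have hdet_e : (Z.submatrix e id).det =
      (Equiv.Perm.sign ((e.trans ρ.symm).trans γ) : K) * M.det := by
    rw [hrel, Matrix.det_permute, Matrix.det_submatrix_equiv_self]
  rw [Matrix.isUnit_iff_isUnit_det, Matrix.isUnit_iff_isUnit_det, hdet_e, hdetM,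
    isUnit_iff_ne_zero, isUnit_iff_ne_zero]
  have hs : ((Equiv.Perm.sign ((e.trans ρ.symm).trans γ) : ℤ) : K) ≠ 0 := by
    rcases Int.units_eq_one_or (Equiv.Perm.sign ((e.trans ρ.symm).trans γ)) with h | h <;>
      simp [h]
  constructor
  · intro h hc; exact h (by rw [hc, mul_zero])
  · intro h hc
    rcases mul_eq_zero.mp hc with h' | h'
    · exact hs h'
    · exact h h'
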